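/- The block language L is max-regular: there exists a max-automaton A with four counters such that L(A) = L. -/

import Mathlib

/-- Counter operations over a set `C` of counters. -/
inductive CounterOp (C : Type*) where
  | inc : C → CounterOp C
  | reset : C → CounterOp C
  | max : C → C → C → CounterOp C

/-- Applying a single counter operation to a counter valuation. -/
def applyOp {C : Type*} [DecidableEq C] (ν : C → ℕ) : CounterOp C → C → ℕ
  | .inc c => Function.update ν c (ν c + 1)
  | .reset c => Function.update ν c 0
  | .max c c₀ c₁ => Function.update ν c (Nat.max (ν c₀) (ν c₁))

/-- Applying a finite sequence of counter operations to a counter valuation. -/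
def applyOps {C : Type*} [DecidableEq C] (ν : C → ℕ) : List (CounterOp C) → C → ℕ
  | [] => ν
  | op :: π => applyOps (applyOp ν op) π

/-- The transfer relation of a single counter operation. -/
def opTransfers {C : Type*} : CounterOp C → C → C → Prop
  | .inc _, c, d => c = d
  | .reset e, c, d => c = d ∧ c ≠ e
  | .max e c₀ c₁, c, d => (c = d ∧ c ≠ e) ∨ ((c = c₀ ∨ c = c₁) ∧ d = e)

/-- `Transfers π c d`: the sequence `π` of counter operations transfers counter `c`
to counter `d`. -/
def Transfers {C : Type*} : List (CounterOp C) → C → C → Prop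
  | [], c, d => c = d
  | op :: π, c, d => ∃ e, opTransfers op c e ∧ Transfers π e d

/-- `TransfersWith π c d m`: `π` transfers `c` to `d` with `m` increments, i.e. `π`
decomposes as `π₀ (inc e₁) π₁ ⋯ (inc e_m) π_m` with `π₀` transferring `c` to `e₁`,
`π_j` transferring `e_j` to `e_{j+1}`, and `π_m` transferring `e_m` to `d`. -/
inductive TransfersWith {C : Type*} : List (CounterOp C) → C → C → ℕ → Prop where
  | zero {π : List (CounterOp C)} {c d : C} :
      Transfers π c d → TransfersWith π c d 0
  | step {π₀ π : List (CounterOp C)} {c e d : C} {m : ℕ} :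
      Transfers π₀ c e → TransfersWith π e d m →
      TransfersWith (π₀ ++ CounterOp.inc e :: π) c d (m + 1)

/-- `π` is a `c`-trace of length `m`: it transfers some counter to `c` with `m` increments. -/
def IsTrace {C : Type*} (π : List (CounterOp C)) (c : C) (m : ℕ) : Prop :=
  ∃ c', TransfersWith π c' c m

/-- A (deterministic, complete) max-automaton with states `Q`, counters `C` and
input alphabet `S`: each transition is labeled by a finite sequence of counter
operations, and the acceptance condition is a boolean combination of the
per-counter conditions "`limsup ρ_c < ∞`". -/
structure MaxAutomaton (S Q C : Type*) where
  init : Q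
  step : Q → S → Q
  label : Q → S → List (CounterOp C)
  acc : (C → Prop) → Prop

namespace MaxAutomaton

variable {S Q C : Type*}

/-- The state of the (unique) run on `α` after `n` letters. -/
def stateAt (A : MaxAutomaton S Q C) (α : ℕ → S) : ℕ → Q
  | 0 => A.init
  | n + 1 => A.step (stateAt A α n) (α n)

/-- The counter valuation reached on the run on `α` after applying all operations
of the first `n` transition labels, starting from the zero valuation. -/
def valSeq [DecidableEq C] (A : MaxAutomaton S Q C) (α : ℕ → S) : ℕ → C → ℕ
  | 0 => fun _ => 0
  | n + 1 => applyOps (valSeq A α n) (A.label (stateAt A α n) (α n))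

/-- The run of `A` on `α` is accepting iff the acceptance condition is satisfied by
the assignment mapping counter `c` to true iff `limsup ρ_c < ∞`. -/
def Accepts [DecidableEq C] (A : MaxAutomaton S Q C) (α : ℕ → S) : Prop :=
  A.acc fun c => Filter.limsup (fun n => ((valSeq A α n c : ℕ) : ℕ∞)) Filter.atTop < ⊤

/-- The language of the max-automaton `A`. -/
def Lang [DecidableEq C] (A : MaxAutomaton S Q C) : Set (ℕ → S) :=
  { α | A.Accepts α }

/-- The flattening of the labels of the first `n` transitions of the run of `A` on `α`. -/
def labelSeq (A : MaxAutomaton S Q C) (α : ℕ → S) : ℕ → List (CounterOp C)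
  | 0 => []
  | n + 1 => labelSeq A α n ++ A.label (stateAt A α n) (α n)

/-- The run of `A` on `α` contains `π`: some prefix of the run ends with `π`. -/
def RunContains (A : MaxAutomaton S Q C) (α : ℕ → S) (π : List (CounterOp C)) : Prop :=
  ∃ n, π <:+ A.labelSeq α n

/-- The extended transition function `δ* : Q × Σ* → Q`. -/
def extStep (A : MaxAutomaton S Q C) : Q → List S → Q
  | q, [] => q
  | q, a :: x => extStep A (A.step q a) x

/-- `ℓ(q, x)`: the sequence of transition labels along the run of `A` on `x` from `q`. -/
def labelsFrom (A : MaxAutomaton S Q C) : Q → List S → List (List (CounterOp C))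
  | _, [] => []
  | q, a :: x => A.label q a :: labelsFrom A (A.step q a) x

end MaxAutomaton

/-- The input alphabet `{0, 1, #}`. -/
inductive InL where
  | zero | one | hash
deriving DecidableEq

instance : Fintype InL :=
  ⟨{.zero, .one, .hash}, fun x => by cases x <;> simp⟩

/-- The output alphabet `{0, 1, *}`. -/
inductive OutL where
  | zero | one | star
deriving DecidableEq

instance : Fintype OutL :=
  ⟨{.zero, .one, .star}, fun x => by cases x <;> simp⟩

instance : Nonempty InL := ⟨.hash⟩
instance : Nonempty OutL := ⟨.star⟩

/-- The letter `0` or `1` of the input alphabet corresponding to a bit. -/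
def bitIn : Bool → InL := fun b => if b then .one else .zero

/-- The letter `0` or `1` of the output alphabet corresponding to a bit. -/
def bitOut : Bool → OutL := fun b => if b then .one else .zero

/-- An input letter is a bit, i.e. `0` or `1`. -/
def IsBit (a : InL) : Prop := a = .zero ∨ a = .one

/-- `α` has an input block (a word `#w` with `w ∈ {0,1}⁺`) of length `n` starting at
position `i`. -/
def InputBlockAt (α : ℕ → InL) (i n : ℕ) : Prop :=
  2 ≤ n ∧ α i = .hash ∧ ∀ j, 1 ≤ j → j < n → IsBit (α (i + j))

/-- `γ` has an output block `(#,a_n)(a_1,*)(a_2,*)⋯(a_{n-1},*)(a_n,a_n)` of length `n+1`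
starting at position `i` (here the block length is `n`, so `2 ≤ n`). -/
def OutputBlockAt (γ : ℕ → InL × OutL) (i n : ℕ) : Prop :=
  2 ≤ n ∧ ∃ b : Bool,
    (γ i).1 = .hash ∧ (γ i).2 = bitOut b ∧
    (∀ j, 1 ≤ j → j < n - 1 → IsBit (γ (i + j)).1 ∧ (γ (i + j)).2 = .star) ∧
    γ (i + (n - 1)) = (bitIn b, bitOut b)

/-- The block language `L`: if the first component contains infinitely many `#` and
arbitrarily long input blocks, then the word contains arbitrarily long output blocks. -/
def BlockLang : Set (ℕ → InL × OutL) :=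
  { γ | ((∀ N, ∃ i, N ≤ i ∧ (γ i).1 = .hash) ∧
          (∀ n, ∃ i m, n ≤ m ∧ InputBlockAt (fun k => (γ k).1) i m)) →
        ∀ n, ∃ i m, n ≤ m ∧ OutputBlockAt γ i m }


/-! ### Auxiliary development for `blockLang_max_regular` -/

namespace BlockAux

open Filter

/-- A sequence of naturals takes arbitrarily large values at arbitrarily late times. -/
def Unbdd (f : ℕ → ℕ) : Prop := ∀ M N : ℕ, ∃ n, N ≤ n ∧ M ≤ f n

lemma limsup_lt_top_iff (f : ℕ → ℕ) :
    Filter.limsup (fun n => ((f n : ℕ) : ℕ∞)) Filter.atTop < ⊤ ↔ ¬ Unbdd f := by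
  constructor
  · intro h hU
    lift Filter.limsup (fun n => ((f n : ℕ) : ℕ∞)) Filter.atTop to ℕ using h.ne with m hm
    have hle : ((m + 1 : ℕ) : ℕ∞) ≤
        Filter.limsup (fun n => ((f n : ℕ) : ℕ∞)) Filter.atTop := by
      refine Filter.le_limsup_of_frequently_le ?_ (by isBoundedDefault)
      rw [Filter.frequently_atTop]
      intro N
      obtain ⟨n, hn, hf⟩ := hU (m + 1) N
      exact ⟨n, hn, by exact_mod_cast hf⟩
    rw [← hm] at hle
    exact absurd (by exact_mod_cast hle) (by omega)
  · intro h
    simp only [Unbdd, not_forall, not_exists, not_and, not_le] at h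
    obtain ⟨M, N, hMN⟩ := h
    have hle : Filter.limsup (fun n => ((f n : ℕ) : ℕ∞)) Filter.atTop ≤ (M : ℕ∞) := by
      refine Filter.limsup_le_of_le (by isBoundedDefault) ?_
      filter_upwards [Filter.eventually_ge_atTop N] with n hn
      exact_mod_cast (hMN n hn).le
    exact lt_of_le_of_lt hle (WithTop.coe_lt_top M)

lemma unbdd_of_mono {f : ℕ → ℕ} (hm : Monotone f) (h : ∀ M, ∃ n, M ≤ f n) : Unbdd f := by
  intro M N
  obtain ⟨n, hn⟩ := h M
  exact ⟨max n N, le_max_right _ _, le_trans hn (hm (le_max_left _ _))⟩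

lemma isBit_of_ne_hash {a : InL} (h : a ≠ .hash) : IsBit a := by
  cases a <;> simp [IsBit] at h ⊢

/-- The output bit of an output letter, if any. -/
def outBit : OutL → Option Bool
  | .zero => some false
  | .one  => some true
  | .star => none

lemma outBit_bitOut (b : Bool) : outBit (bitOut b) = some b := by cases b <;> rfl

lemma bitOut_of_outBit {o : OutL} {b : Bool} (h : outBit o = some b) : o = bitOut b := by
  cases o <;> cases b <;> simp [outBit, bitOut] at h ⊢

lemma star_ne_bitOut (b : Bool) : (OutL.star : OutL) ≠ bitOut b := by cases b <;> simp [bitOut]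

lemma hash_ne_bitIn (b : Bool) : (InL.hash : InL) ≠ bitIn b := by cases b <;> simp [bitIn]

lemma bitIn_ne_hash (b : Bool) : bitIn b ≠ (InL.hash : InL) := by cases b <;> simp [bitIn]

lemma bitOut_ne_star (b : Bool) : bitOut b ≠ (OutL.star : OutL) := by cases b <;> simp [bitOut]

/-- Transition function of the automaton. -/
def stepFn : Bool × Option Bool → InL × OutL → Bool × Option Bool :=
  fun q x =>
    if x.1 = .hash then (true, outBit x.2)
    else (q.1,
      match q.2 with
      | some b =>
          if x.1 = bitIn b ∧ x.2 = bitOut b then none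
          else if x.2 = .star then some b else none
      | none => none)

/-- Labels of the automaton. -/
def labelFn : Bool × Option Bool → InL × OutL → List (CounterOp (Fin 4)) :=
  fun q x =>
    if x.1 = .hash then
      [.inc 0, .reset 1, .inc 1] ++
        (match outBit x.2 with
         | some _ => [.reset 2, .inc 2]
         | none => [.reset 2])
    else
      (if q.1 then [.inc 1] else []) ++
        (match q.2 with
         | some b =>
             if x.1 = bitIn b ∧ x.2 = bitOut b then [.inc 2, .max 3 3 2, .reset 2]
             else if x.2 = .star then [.inc 2] else [.reset 2]
         | none => [.reset 2])

/-- The max-automaton recognizing the block language. -/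
def A : MaxAutomaton (InL × OutL) (Bool × Option Bool) (Fin 4) where
  init := (false, none)
  step := stepFn
  label := labelFn
  acc := fun v => v 0 ∨ v 1 ∨ ¬ v 3

variable (γ : ℕ → InL × OutL)

/-- Number of hashes among the first `n` input letters. -/
def hc : ℕ → ℕ
  | 0 => 0
  | n + 1 => hc n + (if (γ n).1 = .hash then 1 else 0)

/-- Length of the current input block (`#` followed by bits) ending at position `n`. -/
def rl : ℕ → ℕ
  | 0 => 0
  | n + 1 => if (γ n).1 = .hash then 1 else if rl n = 0 then 0 else rl n + 1

/-- The pending output block (its bit and its current length) at position `n`. -/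
def pend : ℕ → Option (Bool × ℕ)
  | 0 => none
  | n + 1 =>
      if (γ n).1 = .hash then (outBit (γ n).2).map (fun b => (b, 1))
      else
        match pend n with
        | some (b, j) =>
            if (γ n).1 = bitIn b ∧ (γ n).2 = bitOut b then none
            else if (γ n).2 = .star then some (b, j + 1) else none
        | none => none

/-- Value of the pending-output counter. -/
def pv (n : ℕ) : ℕ := ((pend γ n).map Prod.snd).getD 0

/-- Maximal length of a completed output block among the first `n` letters. -/
def m3 : ℕ → ℕ
  | 0 => 0
  | n + 1 =>
      match pend γ n with
      | some (b, j) =>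
          if (γ n).1 = bitIn b ∧ (γ n).2 = bitOut b then max (m3 n) (j + 1) else m3 n
      | none => m3 n

/-- The intended counter values. -/
def vals (n : ℕ) : Fin 4 → ℕ := ![hc γ n, rl γ n, pv γ n, m3 γ n]

lemma run_spec (n : ℕ) :
    MaxAutomaton.stateAt A γ n = (decide (rl γ n ≠ 0), (pend γ n).map Prod.fst) ∧
    MaxAutomaton.valSeq A γ n = vals γ n := by
  induction n with
  | zero =>
      constructor
      · simp [MaxAutomaton.stateAt, A, rl, pend]
      · funext c
        fin_cases c <;> simp [MaxAutomaton.valSeq, vals, hc, rl, pv, pend, m3]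
  | succ n ih =>
      obtain ⟨ihs, ihv⟩ := ih
      have hstep : MaxAutomaton.stateAt A γ (n + 1)
          = stepFn (decide (rl γ n ≠ 0), (pend γ n).map Prod.fst) (γ n) := by
        rw [MaxAutomaton.stateAt, ihs]; rfl
      have hval : MaxAutomaton.valSeq A γ (n + 1)
          = applyOps (vals γ n) (labelFn (decide (rl γ n ≠ 0), (pend γ n).map Prod.fst) (γ n)) := by
        rw [MaxAutomaton.valSeq, ihs, ihv]; rfl
      by_cases hh : (γ n).1 = .hash
      · rcases ho : outBit (γ n).2 with _ | b
        all_goals {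
          constructor
          · rw [hstep]
            simp [stepFn, hh, pend, ho, rl]
          · rw [hval]
            funext c
            rcases hp : pend γ n with _ | ⟨b', j⟩ <;>
              fin_cases c <;>
                simp [labelFn, hh, ho, applyOps, applyOp, Function.update, vals, hc, rl, pv,
                  pend, m3, hp, hash_ne_bitIn, bitIn_ne_hash, star_ne_bitOut, bitOut_ne_star] }
      · rcases hp : pend γ n with _ | ⟨b, j⟩
        · constructor
          · rw [hstep]
            simp [stepFn, hh, pend, hp, rl]
          · rw [hval]
            funext c
            by_cases hr : rl γ n = 0 <;>
              fin_cases c <;>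
                simp [labelFn, hh, hp, hr, applyOps, applyOp, Function.update, vals, hc, rl, pv,
                  pend, m3]
        · by_cases hcomp : (γ n).1 = bitIn b ∧ (γ n).2 = bitOut b
          · constructor
            · rw [hstep]
              simp [stepFn, hh, pend, hp, hcomp, rl, bitIn_ne_hash]
            · rw [hval]
              funext c
              by_cases hr : rl γ n = 0 <;>
                fin_cases c <;>
                  simp [labelFn, hh, hp, hcomp, hr, applyOps, applyOp, Function.update, vals,
                    hc, rl, pv, pend, m3, bitIn_ne_hash, star_ne_bitOut, bitOut_ne_star]
          · by_cases hs : (γ n).2 = .star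
            · constructor
              · rw [hstep]
                simp [stepFn, hh, pend, hp, hcomp, hs, rl, bitIn_ne_hash, star_ne_bitOut]
              · rw [hval]
                funext c
                by_cases hr : rl γ n = 0 <;>
                  fin_cases c <;>
                    simp [labelFn, hh, hp, hcomp, hs, hr, applyOps, applyOp, Function.update,
                      vals, hc, rl, pv, pend, m3, bitIn_ne_hash, star_ne_bitOut, bitOut_ne_star]
            · constructor
              · rw [hstep]
                simp [stepFn, hh, pend, hp, hcomp, hs, rl, bitIn_ne_hash, star_ne_bitOut]
              · rw [hval]
                funext c
                by_cases hr : rl γ n = 0 <;>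
                  fin_cases c <;>
                    simp [labelFn, hh, hp, hcomp, hs, hr, applyOps, applyOp, Function.update,
                      vals, hc, rl, pv, pend, m3, bitIn_ne_hash, star_ne_bitOut, bitOut_ne_star]

lemma valSeq_eq (n : ℕ) : MaxAutomaton.valSeq A γ n = vals γ n := (run_spec γ n).2

/-! #### Counter 0: hashes -/

lemma hc_mono : Monotone (hc γ) := by
  apply monotone_nat_of_le_succ
  intro n
  rw [hc]
  omega

lemma exists_hash_of_lt {N n : ℕ} (h : hc γ N < hc γ n) :
    ∃ i, N ≤ i ∧ (γ i).1 = .hash := by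
  induction n with
  | zero => simp [hc] at h
  | succ n ih =>
      by_cases hh : (γ n).1 = .hash
      · by_cases hN : N ≤ n
        · exact ⟨n, hN, hh⟩
        · exact absurd (hc_mono γ (show n + 1 ≤ N by omega)) (by omega)
      · rw [hc, if_neg hh] at h
        exact ih (by omega)

lemma unbdd_hc_iff :
    Unbdd (hc γ) ↔ (∀ N, ∃ i, N ≤ i ∧ (γ i).1 = .hash) := by
  constructor
  · intro hU N
    obtain ⟨n, _, hn⟩ := hU (hc γ N + 1) 0
    exact exists_hash_of_lt γ (N := N) (n := n) (by omega)
  · intro h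
    apply unbdd_of_mono (hc_mono γ)
    intro M
    induction M with
    | zero => exact ⟨0, Nat.zero_le _⟩
    | succ M ih =>
        obtain ⟨n, hn⟩ := ih
        obtain ⟨i, hni, hi⟩ := h n
        refine ⟨i + 1, ?_⟩
        have := hc_mono γ hni
        rw [hc, if_pos hi]
        omega

/-! #### Counter 1: input blocks -/

lemma rl_block {i m : ℕ} (hb : InputBlockAt (fun k => (γ k).1) i m) :
    ∀ k, k < m → rl γ (i + k + 1) = k + 1 := by
  obtain ⟨hm2, hhash, hbits⟩ := hb
  intro k
  induction k with
  | zero => intro _; rw [rl, if_pos hhash]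
  | succ k ih =>
      intro hk
      have hb' : IsBit (γ (i + (k + 1))).1 := hbits (k + 1) (by omega) hk
      have hne : (γ (i + k + 1)).1 ≠ .hash := by
        rcases hb' with h | h <;> (rw [show i + k + 1 = i + (k + 1) by omega, h]; simp)
      have ihk := ih (by omega)
      rw [show i + (k + 1) + 1 = (i + k + 1) + 1 by omega, rl, if_neg hne, ihk]
      simp

lemma rl_spec : ∀ n k, rl γ n = k → 1 ≤ k →
    k ≤ n ∧ (γ (n - k)).1 = .hash ∧ ∀ j, 1 ≤ j → j < k → IsBit (γ (n - k + j)).1 := by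
  intro n
  induction n with
  | zero => intro k hk h1; rw [rl] at hk; omega
  | succ n ih =>
      intro k hk h1
      by_cases hh : (γ n).1 = .hash
      · rw [rl, if_pos hh] at hk
        subst hk
        refine ⟨by omega, by simpa using hh, ?_⟩
        intro j hj1 hj; omega
      · rw [rl, if_neg hh] at hk
        by_cases hr : rl γ n = 0
        · rw [if_pos hr] at hk; omega
        · rw [if_neg hr] at hk
          obtain ⟨hle, hhash, hbits⟩ := ih (k - 1) (by omega) (by omega)
          have he : n + 1 - k = n - (k - 1) := by omega
          refine ⟨by omega, by rw [he]; exact hhash, ?_⟩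
          intro j hj1 hj
          by_cases hjk : j < k - 1
          · rw [show n + 1 - k + j = n - (k - 1) + j by omega]
            exact hbits j hj1 hjk
          · rw [show n + 1 - k + j = n by omega]
            exact isBit_of_ne_hash hh

lemma unbdd_rl_iff :
    Unbdd (rl γ) ↔ (∀ n, ∃ i m, n ≤ m ∧ InputBlockAt (fun k => (γ k).1) i m) := by
  constructor
  · intro hU n
    obtain ⟨n', _, h⟩ := hU (max n 2) 0
    have h2 : 2 ≤ rl γ n' := le_trans (le_max_right _ _) h
    obtain ⟨hle, hhash, hbits⟩ := rl_spec γ n' (rl γ n') rfl (by omega)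
    exact ⟨n' - rl γ n', rl γ n', le_trans (le_max_left _ _) h, by omega, hhash, hbits⟩
  · intro h M N
    obtain ⟨i, m, hm, hb⟩ := h (max M N)
    have h2 : 2 ≤ m := hb.1
    have := rl_block γ hb (m - 1) (by omega)
    refine ⟨i + m, by omega, ?_⟩
    rw [show i + m = i + (m - 1) + 1 by omega, this]
    omega

/-! #### Counters 2 and 3: output blocks -/

lemma pend_block {i m : ℕ} {b : Bool} (hm2 : 2 ≤ m)
    (h0 : (γ i).1 = .hash) (h1 : (γ i).2 = bitOut b)
    (hmid : ∀ j, 1 ≤ j → j < m - 1 → IsBit (γ (i + j)).1 ∧ (γ (i + j)).2 = .star) :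
    ∀ k, k ≤ m - 2 → pend γ (i + k + 1) = some (b, k + 1) := by
  intro k
  induction k with
  | zero =>
      intro _
      rw [pend, if_pos h0, h1, outBit_bitOut]
      rfl
  | succ k ih =>
      intro hk
      obtain ⟨hbit, hstar⟩ := hmid (k + 1) (by omega) (by omega)
      have hne : (γ (i + k + 1)).1 ≠ .hash := by
        rcases hbit with h | h <;> (rw [show i + k + 1 = i + (k + 1) by omega, h]; simp)
      have hstar' : (γ (i + k + 1)).2 = .star := by
        rw [show i + k + 1 = i + (k + 1) by omega]; exact hstar
      have hnc : ¬((γ (i + k + 1)).1 = bitIn b ∧ (γ (i + k + 1)).2 = bitOut b) := by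
        rintro ⟨-, h2⟩
        rw [hstar'] at h2
        exact star_ne_bitOut b h2
      rw [show i + (k + 1) + 1 = (i + k + 1) + 1 by omega, pend, if_neg hne,
        ih (by omega)]
      simp [hstar', star_ne_bitOut]

lemma m3_block {i m : ℕ} (hb : OutputBlockAt γ i m) : m ≤ m3 γ (i + m) := by
  obtain ⟨hm2, b, h0, h1, hmid, hlast⟩ := hb
  have hp : pend γ (i + (m - 2) + 1) = some (b, m - 2 + 1) :=
    pend_block γ hm2 h0 h1 hmid (m - 2) le_rfl
  have he : i + (m - 2) + 1 = i + (m - 1) := by omega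
  rw [he] at hp
  have hcomp : (γ (i + (m - 1))).1 = bitIn b ∧ (γ (i + (m - 1))).2 = bitOut b := by
    rw [hlast]; exact ⟨rfl, rfl⟩
  rw [show i + m = (i + (m - 1)) + 1 by omega, m3, hp]
  simp only [hcomp, and_self, if_true]
  omega

lemma pend_spec : ∀ n (b : Bool) j, pend γ n = some (b, j) →
    1 ≤ j ∧ j ≤ n ∧ (γ (n - j)).1 = .hash ∧ (γ (n - j)).2 = bitOut b ∧
      ∀ l, 1 ≤ l → l < j → IsBit (γ (n - j + l)).1 ∧ (γ (n - j + l)).2 = .star := by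
  intro n
  induction n with
  | zero => intro b j h; rw [pend] at h; simp at h
  | succ n ih =>
      intro b j h
      by_cases hh : (γ n).1 = .hash
      · rw [pend, if_pos hh] at h
        rcases ho : outBit (γ n).2 with _ | b'
        · rw [ho] at h; simp at h
        · rw [ho] at h
          obtain ⟨hb, hj⟩ : b' = b ∧ 1 = j := by simpa using h
          subst hb; subst hj
          refine ⟨le_rfl, by omega, by simpa using hh, by simpa using bitOut_of_outBit ho, ?_⟩
          intro l hl1 hl; omega
      · rw [pend, if_neg hh] at h
        rcases hp : pend γ n with _ | ⟨b', j'⟩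
        · rw [hp] at h; simp at h
        · rw [hp] at h
          replace h : (if (γ n).1 = bitIn b' ∧ (γ n).2 = bitOut b' then none
              else if (γ n).2 = OutL.star then some (b', j' + 1) else none) = some (b, j) := h
          by_cases hcomp : (γ n).1 = bitIn b' ∧ (γ n).2 = bitOut b'
          · simp [hcomp] at h
          · by_cases hs : (γ n).2 = .star
            · rw [if_neg hcomp, if_pos hs] at h
              obtain ⟨hb, hj⟩ : b' = b ∧ j' + 1 = j := by simpa using h
              subst hb
              obtain ⟨h1', hle', hhash', hbit', hmid'⟩ := ih b' j' hp
              have he : n + 1 - j = n - j' := by omega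
              refine ⟨by omega, by omega, by rw [he]; exact hhash', by rw [he]; exact hbit', ?_⟩
              intro l hl1 hl
              by_cases hlj : l < j'
              · rw [show n + 1 - j + l = n - j' + l by omega]
                exact hmid' l hl1 hlj
              · rw [show n + 1 - j + l = n by omega]
                exact ⟨isBit_of_ne_hash hh, hs⟩
            · simp [hcomp, hs] at h

lemma outBlock_of_pend_comp {n j : ℕ} {b : Bool} (hp : pend γ n = some (b, j))
    (h1 : (γ n).1 = bitIn b) (h2 : (γ n).2 = bitOut b) :
    OutputBlockAt γ (n - j) (j + 1) := by
  obtain ⟨hj1, hjn, hhash, hbit, hmid⟩ := pend_spec γ n b j hp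
  refine ⟨by omega, b, hhash, hbit, ?_, ?_⟩
  · intro l hl1 hl
    exact hmid l hl1 (by omega)
  · rw [show n - j + (j + 1 - 1) = n by omega]
    exact Prod.ext h1 h2

lemma m3_mono : Monotone (m3 γ) := by
  apply monotone_nat_of_le_succ
  intro n
  rw [m3]
  rcases hp : pend γ n with _ | ⟨b, j⟩
  · exact le_rfl
  · show m3 γ n ≤ if (γ n).1 = bitIn b ∧ (γ n).2 = bitOut b then max (m3 γ n) (j + 1) else m3 γ n
    split
    · exact le_max_left _ _
    · exact le_rfl

lemma m3_ge : ∀ n M, 1 ≤ M → M ≤ m3 γ n → ∃ i m, M ≤ m ∧ OutputBlockAt γ i m := by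
  intro n
  induction n with
  | zero => intro M h1 h; rw [m3] at h; omega
  | succ n ih =>
      intro M h1 h
      rw [m3] at h
      rcases hp : pend γ n with _ | ⟨b, j⟩
      · rw [hp] at h; exact ih M h1 h
      · rw [hp] at h
        replace h : M ≤ if (γ n).1 = bitIn b ∧ (γ n).2 = bitOut b
            then max (m3 γ n) (j + 1) else m3 γ n := h
        by_cases hcomp : (γ n).1 = bitIn b ∧ (γ n).2 = bitOut b
        · rw [if_pos hcomp] at h
          by_cases hMj : M ≤ j + 1
          · exact ⟨n - j, j + 1, hMj, outBlock_of_pend_comp γ hp hcomp.1 hcomp.2⟩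
          · refine ih M h1 ?_
            rw [max_def] at h
            split at h <;> omega
        · rw [if_neg hcomp] at h; exact ih M h1 h

lemma unbdd_m3_iff :
    Unbdd (m3 γ) ↔ (∀ n, ∃ i m, n ≤ m ∧ OutputBlockAt γ i m) := by
  constructor
  · intro hU n
    obtain ⟨t, _, h⟩ := hU (max n 1) 0
    obtain ⟨i, m, hm, hb⟩ := m3_ge γ t (max n 1) (le_max_right _ _) h
    exact ⟨i, m, le_trans (le_max_left _ _) hm, hb⟩
  · intro h
    apply unbdd_of_mono (m3_mono γ)
    intro M
    obtain ⟨i, m, hm, hb⟩ := h M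
    exact ⟨i + m, le_trans hm (m3_block γ hb)⟩

end BlockAux

/-- The block language is max-regular: it is recognized by a max-automaton with
four counters. -/
theorem blockLang_max_regular :
    ∃ (Q : Type) (_ : Fintype Q) (A : MaxAutomaton (InL × OutL) Q (Fin 4)),
      A.Lang = BlockLang := by
  classical
  refine ⟨Bool × Option Bool, inferInstance, BlockAux.A, ?_⟩
  ext γ
  have e : ∀ c : Fin 4,
      (fun n => ((MaxAutomaton.valSeq BlockAux.A γ n c : ℕ) : ℕ∞))
        = fun n => ((BlockAux.vals γ n c : ℕ) : ℕ∞) := by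
    intro c; funext n; rw [BlockAux.valSeq_eq]
  have hmem : γ ∈ MaxAutomaton.Lang BlockAux.A ↔
      (¬ BlockAux.Unbdd (BlockAux.hc γ) ∨ ¬ BlockAux.Unbdd (BlockAux.rl γ) ∨
        BlockAux.Unbdd (BlockAux.m3 γ)) := by
    show MaxAutomaton.Accepts BlockAux.A γ ↔ _
    rw [MaxAutomaton.Accepts]
    show ((_ < ⊤) ∨ (_ < ⊤) ∨ ¬ (_ < ⊤)) ↔ _
    rw [e 0, e 1, e 3]
    have v0 : ∀ n, BlockAux.vals γ n 0 = BlockAux.hc γ n := fun n => rfl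
    have v1 : ∀ n, BlockAux.vals γ n 1 = BlockAux.rl γ n := fun n => rfl
    have v3 : ∀ n, BlockAux.vals γ n 3 = BlockAux.m3 γ n := fun n => rfl
    simp only [v0, v1, v3, BlockAux.limsup_lt_top_iff, not_not]
  rw [hmem, BlockAux.unbdd_hc_iff, BlockAux.unbdd_rl_iff, BlockAux.unbdd_m3_iff]
  show _ ↔ γ ∈ BlockLang
  rw [BlockLang, Set.mem_setOf_eq]
  tauto
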